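/- Let X₁, …, X_N be i.i.d. Rayleigh random variables with second moment μ (i.e., X_i² = μ·E_i/2 pointwise in distribution where 2X_i²/μ is chi-squared with 2 degrees of freedom), and let μ̂_N = (X₁² + ⋯ + X_N²)/N. If 0 < ε < 1, 0 < δ < 1, and N > 2(3 + 2ε)ln(2/δ)/(3ε²), then Pr{|μ̂_N − μ|/μ < ε} > 1 − δ. -/

import Mathlib

/-! The variables `Zᵢ = 2 Xᵢ² / μ` are i.i.d. exponential with rate `1/2`, and the relative error
of `μ̂_N` is `(1/2) · (Z₁ + ⋯ + Z_N) / N - 1`. Since the exponential law of rate `r` has moment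
generating function `r / (r - t)`, Chernoff's bound at the optimal `t` bounds the probabilities that
`Z₁ + ⋯ + Z_N` exceeds `N (1 + ε) / r` or falls below `N (1 - ε) / r` by `((1 + ε) e^{-ε})^N` and
`((1 - ε) e^ε)^N`. The elementary inequalities `log (1 + ε) ≤ ε - 3ε² / (2 (3 + 2ε))` and
`log (1 - ε) ≤ -ε - ε² / 2` bound both tails by `exp (-3Nε² / (2 (3 + 2ε)))`, which the hypothesis
on `N` makes smaller than `δ / 2`. -/

open MeasureTheory ProbabilityTheory
open Real Set

lemma log_one_sub_le_neg_sub_sq_div_two {x : ℝ} (hx₀ : 0 ≤ x) (hx₁ : x < 1) :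
    log (1 - x) ≤ -x - x ^ 2 / 2 := by
  have h := sum_le_hasSum (Finset.range 2) (fun n _ => by positivity)
    (hasSum_pow_div_log_of_abs_lt_one (by rwa [abs_of_nonneg hx₀]))
  norm_num [Finset.sum_range_succ] at h
  linarith

lemma log_one_add_le_sub_three_mul_sq_div {x : ℝ} (hx : 0 ≤ x) :
    log (1 + x) ≤ x - 3 * x ^ 2 / (2 * (3 + 2 * x)) := by
  let g : ℝ → ℝ := fun y => y - 3 * y ^ 2 / (2 * (3 + 2 * y)) - log (1 + y)
  have hg : ∀ y ∈ Ici (0 : ℝ), HasDerivAt g (y ^ 3 / ((1 + y) * (3 + 2 * y) ^ 2)) y := by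
    intro y (hy : 0 ≤ y)
    refine (((hasDerivAt_id y).sub ((((hasDerivAt_id y).pow 2).const_mul 3).div
      ((((hasDerivAt_id y).const_mul 2).const_add 3).const_mul 2) (by positivity))).sub
      (((hasDerivAt_id y).const_add 1).log (by positivity))).congr_deriv ?_
    simp only [id, Pi.pow_apply]
    field_simp
    ring
  have hmono : MonotoneOn g (Ici 0) :=
    monotoneOn_of_hasDerivWithinAt_nonneg (convex_Ici 0)
      (fun y hy => (hg y hy).continuousAt.continuousWithinAt)
      (fun y hy => (hg y (interior_subset hy)).hasDerivWithinAt)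
      (fun y hy => by rw [interior_Ici] at hy; have : (0 : ℝ) ≤ y := hy.le; positivity)
  have hg0 := hmono self_mem_Ici hx hx
  norm_num [g] at hg0
  linarith

lemma expMeasure_eq_withDensity (r : ℝ) :
    expMeasure r = volume.withDensity (exponentialPDF r) := rfl

lemma exponentialPDF_toReal_mul_exp {r : ℝ} (hr : 0 ≤ r) (t x : ℝ) :
    (exponentialPDF r x).toReal * exp (t * x) =
      (Ici 0).indicator (fun x => r * exp ((t - r) * x)) x := by
  by_cases hx : 0 ≤ x
  · rw [exponentialPDF_of_nonneg hx, ENNReal.toReal_ofReal (by positivity),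
      indicator_of_mem (mem_Ici.mpr hx), mul_assoc, ← exp_add]
    ring_nf
  · rw [exponentialPDF_of_neg (not_le.mp hx), indicator_of_notMem (mt mem_Ici.mp hx),
      ENNReal.toReal_zero, zero_mul]

lemma integrable_exp_mul_expMeasure {r t : ℝ} (hr : 0 ≤ r) (ht : t < r) :
    Integrable (fun x => exp (t * x)) (expMeasure r) := by
  rw [expMeasure_eq_withDensity,
    integrable_withDensity_iff_integrable_smul' (f := exponentialPDF r)
      (by unfold exponentialPDF; fun_prop) (ae_of_all _ fun _ => ENNReal.ofReal_lt_top)]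
  simp only [smul_eq_mul, exponentialPDF_toReal_mul_exp hr]
  rw [integrable_indicator_iff measurableSet_Ici, integrableOn_Ici_iff_integrableOn_Ioi]
  exact (integrableOn_exp_mul_Ioi (by linarith) 0).const_mul r

lemma mgf_id_expMeasure {r t : ℝ} (hr : 0 ≤ r) (ht : t < r) :
    mgf id (expMeasure r) t = r / (r - t) := by
  rw [mgf, expMeasure_eq_withDensity,
    integral_withDensity_eq_integral_toReal_smul (f := exponentialPDF r)
      (by unfold exponentialPDF; fun_prop) (ae_of_all _ fun _ => ENNReal.ofReal_lt_top)]
  simp only [id, smul_eq_mul, exponentialPDF_toReal_mul_exp hr]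
  rw [integral_indicator measurableSet_Ici, integral_Ici_eq_integral_Ioi, integral_const_mul,
    integral_exp_mul_Ioi (by linarith), mul_zero, exp_zero, neg_div, ← div_neg, neg_sub,
    mul_one_div]

section IIDExponential

variable {Ω ι : Type*} [MeasurableSpace Ω] {P : Measure Ω} [Fintype ι]
  {Z : ι → Ω → ℝ} {r t : ℝ}

lemma mgf_sum_of_map_eq_expMeasure (hmeas : ∀ i, Measurable (Z i)) (hindep : iIndepFun Z P)
    (hlaw : ∀ i, P.map (Z i) = expMeasure r) (hr : 0 ≤ r) (ht : t < r) :
    mgf (∑ i, Z i) P t = (r / (r - t)) ^ Fintype.card ι := by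
  simp only [hindep.mgf_sum hmeas, ← mgf_id_map (hmeas _).aemeasurable, hlaw,
    mgf_id_expMeasure hr ht, Finset.prod_const, Finset.card_univ]

lemma integrable_exp_mul_sum_of_map_eq_expMeasure [IsFiniteMeasure P]
    (hmeas : ∀ i, Measurable (Z i)) (hindep : iIndepFun Z P)
    (hlaw : ∀ i, P.map (Z i) = expMeasure r) (hr : 0 ≤ r)
    (ht : t < r) : Integrable (fun ω => exp (t * (∑ i, Z i) ω)) P :=
  hindep.integrable_exp_mul_sum hmeas fun i _ =>
    (hlaw i ▸ integrable_exp_mul_expMeasure hr ht).comp_measurable (hmeas i)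

lemma measureReal_sum_ge_le_of_map_eq_expMeasure [IsFiniteMeasure P]
    (hmeas : ∀ i, Measurable (Z i)) (hindep : iIndepFun Z P)
    (hlaw : ∀ i, P.map (Z i) = expMeasure r) (hr : 0 < r)
    {ε : ℝ} (hε : 0 ≤ ε) :
    P.real {ω | Fintype.card ι * (1 + ε) / r ≤ (∑ i, Z i) ω} ≤
      ((1 + ε) * exp (-ε)) ^ Fintype.card ι := by
  -- the minimiser of `t ↦ exp (-t a) * (r / (r - t)) ^ n` at `a = n (1 + ε) / r`
  set t := r * ε / (1 + ε)
  have ht : t < r := by rw [div_lt_iff₀ (by positivity)]; nlinarith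
  refine (measure_ge_le_exp_mul_mgf _ (by positivity)
    (integrable_exp_mul_sum_of_map_eq_expMeasure hmeas hindep hlaw hr.le ht)).trans_eq ?_
  rw [mgf_sum_of_map_eq_expMeasure hmeas hindep hlaw hr.le ht, mul_pow, ← exp_nat_mul]
  have hmgf : r / (r - t) = 1 + ε := by
    rw [div_eq_iff (by linarith)]; simp only [t]; field_simp; ring
  have hexp : -t * (Fintype.card ι * (1 + ε) / r) = Fintype.card ι * -ε := by
    simp only [t]; field_simp
  rw [hmgf, hexp, mul_comm]

lemma measureReal_sum_le_le_of_map_eq_expMeasure [IsFiniteMeasure P]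
    (hmeas : ∀ i, Measurable (Z i)) (hindep : iIndepFun Z P)
    (hlaw : ∀ i, P.map (Z i) = expMeasure r) (hr : 0 < r)
    {ε : ℝ} (hε₀ : 0 ≤ ε) (hε₁ : ε < 1) :
    P.real {ω | (∑ i, Z i) ω ≤ Fintype.card ι * (1 - ε) / r} ≤
      ((1 - ε) * exp ε) ^ Fintype.card ι := by
  -- the minimiser of `t ↦ exp (-t a) * (r / (r - t)) ^ n` at `a = n (1 - ε) / r`
  set t := -(r * ε / (1 - ε))
  have hε : 0 < 1 - ε := by linarith
  have ht : t ≤ 0 := by simp only [t, neg_nonpos]; positivity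
  have htr : t < r := by linarith
  refine (measure_le_le_exp_mul_mgf _ ht
    (integrable_exp_mul_sum_of_map_eq_expMeasure hmeas hindep hlaw hr.le htr)).trans_eq ?_
  rw [mgf_sum_of_map_eq_expMeasure hmeas hindep hlaw hr.le htr, mul_pow, ← exp_nat_mul]
  have hmgf : r / (r - t) = 1 - ε := by
    rw [div_eq_iff (by linarith)]; simp only [t]; field_simp; ring
  have hexp : -t * (Fintype.card ι * (1 - ε) / r) = Fintype.card ι * ε := by
    simp only [t]; field_simp
  rw [hmgf, hexp, mul_comm]

lemma le_measureReal_abs_mul_sum_div_sub_one_lt [IsProbabilityMeasure P]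
    (hmeas : ∀ i, Measurable (Z i)) (hindep : iIndepFun Z P)
    (hlaw : ∀ i, P.map (Z i) = expMeasure r) (hr : 0 < r) {ε : ℝ} (hε₀ : 0 ≤ ε) (hε₁ : ε < 1) :
    1 - 2 * exp (-(Fintype.card ι * (3 * ε ^ 2 / (2 * (3 + 2 * ε))))) ≤
      P.real {ω | |r * (∑ i, Z i ω) / Fintype.card ι - 1| < ε} := by
  set n := Fintype.card ι
  set c := 3 * ε ^ 2 / (2 * (3 + 2 * ε))
  rcases Nat.eq_zero_or_pos n with hn | hn
  · simp only [hn, CharP.cast_eq_zero, zero_mul, neg_zero, exp_zero]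
    linarith [measureReal_nonneg (μ := P) (s := {ω | |r * (∑ i, Z i ω) / 0 - 1| < ε})]
  have hn' : (0 : ℝ) < n := Nat.cast_pos.mpr hn
  set A := {ω | |r * (∑ i, Z i ω) / n - 1| < ε}
  have hA : MeasurableSet A := measurableSet_lt (by fun_prop) measurable_const
  have hupper : P.real {ω | n * (1 + ε) / r ≤ (∑ i, Z i) ω} ≤ exp (-(n * c)) := by
    refine (measureReal_sum_ge_le_of_map_eq_expMeasure hmeas hindep hlaw hr hε₀).trans ?_
    rw [← exp_log (by positivity : 0 < 1 + ε), ← exp_add, ← exp_nat_mul, ← mul_neg]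
    gcongr
    linarith [log_one_add_le_sub_three_mul_sq_div hε₀]
  have hlower : P.real {ω | (∑ i, Z i) ω ≤ n * (1 - ε) / r} ≤ exp (-(n * c)) := by
    refine (measureReal_sum_le_le_of_map_eq_expMeasure hmeas hindep hlaw hr hε₀ hε₁).trans ?_
    rw [← exp_log (by linarith : 0 < 1 - ε), ← exp_add, ← exp_nat_mul, ← mul_neg]
    gcongr
    have hc : c ≤ ε ^ 2 / 2 := by
      rw [div_le_div_iff₀ (by positivity) (by norm_num)]; nlinarith
    linarith [log_one_sub_le_neg_sub_sq_div_two hε₀ hε₁]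
  have hcover : Aᶜ ⊆
      {ω | n * (1 + ε) / r ≤ (∑ i, Z i) ω} ∪ {ω | (∑ i, Z i) ω ≤ n * (1 - ε) / r} := by
    intro ω hω
    simp only [A, mem_compl_iff, mem_union, mem_ofPred_eq, not_lt, le_abs', Finset.sum_apply]
      at hω ⊢
    rcases hω with h | h
    · right
      have := (div_le_iff₀ hn').mp (show (r * ∑ i, Z i ω) / n ≤ 1 - ε by linarith)
      rw [le_div_iff₀ hr]
      linarith
    · left
      have := (le_div_iff₀ hn').mp (show 1 + ε ≤ (r * ∑ i, Z i ω) / n by linarith)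
      rw [div_le_iff₀ hr]
      linarith
  have hcompl := (measureReal_mono (μ := P) hcover).trans (measureReal_union_le _ _)
  rw [probReal_compl_eq_one_sub hA] at hcompl
  linarith

end IIDExponential

theorem stmt_9 {Ω : Type*} [MeasurableSpace Ω] (P : Measure Ω) [IsProbabilityMeasure P]
    (N : ℕ) (μ ε δ : ℝ) (hμ : 0 < μ) (hε1 : 0 < ε) (hε2 : ε < 1)
    (hδ1 : 0 < δ) (hδ2 : δ < 1)
    (X : Fin N → Ω → ℝ) (hmeas : ∀ i, Measurable (X i))
    (hindep : iIndepFun X P)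
    (hdist : ∀ i, P.map (fun ω => 2 * (X i ω) ^ 2 / μ) = expMeasure (1 / 2))
    (hN : (N : ℝ) > 2 * (3 + 2 * ε) * Real.log (2 / δ) / (3 * ε ^ 2)) :
    P {ω | |((∑ i, (X i ω) ^ 2) / N - μ) / μ| < ε} > ENNReal.ofReal (1 - δ) := by
  set Z : Fin N → Ω → ℝ := fun i ω => 2 * X i ω ^ 2 / μ
  have hZmeas : ∀ i, Measurable (Z i) := fun i => by fun_prop
  have hZindep : iIndepFun Z P := hindep.comp (fun _ x => 2 * x ^ 2 / μ) fun _ => by fun_prop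
  have hconc := le_measureReal_abs_mul_sum_div_sub_one_lt hZmeas hZindep hdist one_half_pos
    hε1.le hε2
  rw [Fintype.card_fin] at hconc
  set c := 3 * ε ^ 2 / (2 * (3 + 2 * ε))
  have htail : 2 * exp (-(N * c)) < δ := by
    have hlog : log (2 / δ) < N * c := by
      rw [gt_iff_lt, div_lt_iff₀ (by positivity)] at hN
      rw [mul_div_assoc', lt_div_iff₀ (by positivity)]
      linarith
    calc 2 * exp (-(N * c)) < 2 * exp (-log (2 / δ)) := by gcongr
      _ = δ := by rw [exp_neg, exp_log (by positivity)]; field_simp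
  have hevent : {ω | |((∑ i, X i ω ^ 2) / N - μ) / μ| < ε} =
      {ω | |1 / 2 * (∑ i, Z i ω) / N - 1| < ε} := by
    ext ω
    simp only [Z, ← Finset.sum_div, ← Finset.mul_sum]
    congr! 3
    field_simp
  rw [gt_iff_lt, hevent, ← ofReal_measureReal, ENNReal.ofReal_lt_ofReal_iff (by linarith)]
  linarith
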